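/- Let Δ be a finite simplicial complex on vertex set V, e = {a,b} an edge of Δ, v ∉ V a new vertex, Γ the stellar subdivision of Δ at e with new vertex v, and M a missing face of Δ with |M| ≥ 3 and e ⊆ M. Then M is not a missing face of Γ, and (M \ {a,b}) ∪ {v} is a missing face of Γ of cardinality |M| − 1. -/

import Mathlib

/-! Since `v` lies in no face of `Δ`, the faces of `Γ` avoiding `v` are the faces of `Δ` not
containing `e`, and those containing `v` are `v` joined with a proper subset of `e` and a face
of the link of `e`. So `e ⊊ M` is no longer a face of `Γ`. A proper subset of
`(M \ e) ∪ {v}` is either a subset of `M \ e`, hence a face of `Δ` missing a vertex of `e`, or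
`v` joined with some `T ⊊ M \ e`, where `T ∪ e ⊊ M` is a face of `Δ`; while
`(M \ e) ∪ {v}` itself would force `M = (M \ e) ∪ e` to be a face of `Δ`. -/

/-- A finite simplicial complex on a finite vertex set `V`: a collection of nonempty
subsets of `V` (faces), closed under taking nonempty subsets, containing all singletons. -/
structure SC (α : Type*) where
  V : Finset α
  faces : Set (Finset α)
  nonempty_mem : ∀ F ∈ faces, F.Nonempty
  subset_V : ∀ F ∈ faces, F ⊆ V
  down_closed : ∀ F ∈ faces, ∀ T ⊆ F, T.Nonempty → T ∈ faces
  singleton_mem : ∀ x ∈ V, ({x} : Finset α) ∈ faces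

/-- The link of a face `F` in a collection of faces `K`. -/
def lkS {α : Type*} [DecidableEq α] (K : Set (Finset α)) (F : Finset α) : Set (Finset α) :=
  {T | T.Nonempty ∧ T ∩ F = ∅ ∧ T ∪ F ∈ K}

/-- The faces of the stellar subdivision of `K` at `F` with new vertex `v`. -/
def stellarS {α : Type*} [DecidableEq α] (K : Set (Finset α)) (F : Finset α) (v : α) :
    Set (Finset α) :=
  {T ∈ K | ¬ F ⊆ T} ∪
  {U | ∃ S T : Finset α, S ⊂ F ∧ (T ∈ lkS K F ∨ T = ∅) ∧ U = insert v (S ∪ T)}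

/-- `Γ` is the stellar subdivision of the simplicial complex `Δ` at the face `F`
(of size at least 2) with new vertex `v ∉ Δ.V`. -/
def IsStellar {α : Type*} [DecidableEq α] (Δ Γ : SC α) (F : Finset α) (v : α) : Prop :=
  F ∈ Δ.faces ∧ 2 ≤ F.card ∧ v ∉ Δ.V ∧
  Γ.V = insert v Δ.V ∧ Γ.faces = stellarS Δ.faces F v

/-- `Γ` is an edge subdivision of `Δ`: a stellar subdivision at a face of size 2. -/
def IsEdgeSubdivOf {α : Type*} [DecidableEq α] (Δ Γ : SC α) : Prop :=
  ∃ (e : Finset α) (v : α), e.card = 2 ∧ IsStellar Δ Γ e v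

/-- `F` is a missing face of the collection of faces `K`: it has size at least 2, it is
not a face, and all its proper nonempty subsets are faces. -/
def Missing {α : Type*} (K : Set (Finset α)) (F : Finset α) : Prop :=
  2 ≤ F.card ∧ F ∉ K ∧ ∀ T ⊂ F, T.Nonempty → T ∈ K

/-- A simplicial complex is flag if all its missing faces have size two. -/
def IsFlag {α : Type*} (Δ : SC α) : Prop := ∀ F, Missing Δ.faces F → F.card = 2

/-- The pair (faces `K`, vertex set `V`) is isomorphic to the pair (faces `L`, vertex
set `W`): some bijection of the vertex sets maps the faces exactly onto the faces. -/
def IsomS {α β : Type*} [DecidableEq α] [DecidableEq β] (K : Set (Finset α)) (V : Set α)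
    (L : Set (Finset β)) (W : Set β) : Prop :=
  ∃ f : α → β, Set.BijOn f V W ∧
    ∀ T : Finset α, ↑T ⊆ V → (T ∈ K ↔ T.image f ∈ L)

/-- Two simplicial complexes are isomorphic. -/
def Isom {α β : Type*} [DecidableEq α] [DecidableEq β] (Δ : SC α) (Γ : SC β) : Prop :=
  IsomS Δ.faces ↑Δ.V Γ.faces ↑Γ.V

/-- One of `X`, `Y` is isomorphic to a stellar subdivision of the other. -/
def StellarIsoStep {α : Type*} [DecidableEq α] (X Y : SC α) : Prop :=
  (∃ (Z : SC α) (F : Finset α) (w : α), IsStellar X Z F w ∧ Isom Z Y) ∨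
  (∃ (Z : SC α) (F : Finset α) (w : α), IsStellar Y Z F w ∧ Isom Z X)

/-- One of `X`, `Y` is isomorphic to an edge subdivision of the other. -/
def EdgeIsoStep {α : Type*} [DecidableEq α] (X Y : SC α) : Prop :=
  (∃ Z : SC α, IsEdgeSubdivOf X Z ∧ Isom Z Y) ∨
  (∃ Z : SC α, IsEdgeSubdivOf Y Z ∧ Isom Z X)

theorem Missing.notMem_of_forall_notMem {α : Type*} {K : Set (Finset α)} {M : Finset α} {v : α}
    (hM : Missing K M) (hv : ∀ T ∈ K, v ∉ T) : v ∉ M := by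
  intro hvM
  have hsingle : ({v} : Finset α) ⊂ M := by
    refine Finset.ssubset_iff_subset_ne.2 ⟨Finset.singleton_subset_iff.2 hvM, ?_⟩
    rintro rfl
    simpa using hM.1
  exact hv _ (hM.2.2 _ hsingle (Finset.singleton_nonempty v)) (Finset.mem_singleton_self v)

theorem not_missing_of_ssubset_of_notMem {α : Type*} {L : Set (Finset α)} {F M : Finset α}
    (hFM : F ⊂ M) (hF : F.Nonempty) (hFL : F ∉ L) : ¬ Missing L M :=
  fun hM => hFL (hM.2.2 F hFM hF)

section Stellar

variable {α : Type*} [DecidableEq α] {K : Set (Finset α)} {F M T : Finset α} {v : α}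

theorem notMem_stellarS_self (hvF : v ∉ F) : F ∉ stellarS K F v := by
  rintro (⟨-, hFF⟩ | ⟨S, T, -, -, rfl⟩)
  · exact hFF subset_rfl
  · exact hvF (Finset.mem_insert_self v _)

theorem insert_mem_stellarS (hF : F.Nonempty) (hTF : Disjoint T F) (hTFK : T ∪ F ∈ K) :
    insert v T ∈ stellarS K F v := by
  refine Or.inr ⟨∅, T, Finset.empty_ssubset.2 hF, ?_, by rw [Finset.empty_union]⟩
  rcases T.eq_empty_or_nonempty with hT | hT
  · exact Or.inr hT
  · exact Or.inl ⟨hT, Finset.disjoint_iff_inter_eq_empty.1 hTF, hTFK⟩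

theorem insert_sdiff_notMem_stellarS (hv : ∀ T ∈ K, v ∉ T) (hMK : M ∉ K) (hFM : F ⊂ M)
    (hvM : v ∉ M) : insert v (M \ F) ∉ stellarS K F v := by
  rintro (⟨hK, -⟩ | ⟨S, T, hSF, hT, hST⟩)
  · exact hv _ hK (Finset.mem_insert_self v _)
  have hvT : v ∉ T := by
    rcases hT with ⟨-, -, hTK⟩ | rfl
    · exact fun hvT => hv _ hTK (Finset.mem_union_left F hvT)
    · exact Finset.notMem_empty v
  have hvS : v ∉ S := fun hvS => hvM (hFM.1 (hSF.1 hvS))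
  -- Erasing `v` on both sides gives `S ∪ T = M \ F`, and `S ⊆ F` then forces `S = ∅`.
  have hST' : S ∪ T = M \ F := by
    have := congrArg (Finset.erase · v) hST
    simp only [Finset.erase_insert (fun h => hvM (Finset.mem_sdiff.1 h).1),
      Finset.erase_insert (Finset.notMem_union.2 ⟨hvS, hvT⟩)] at this
    exact this.symm
  have hS : S = ∅ := Finset.eq_empty_of_forall_notMem fun x hx =>
    (Finset.mem_sdiff.1 (hST' ▸ Finset.mem_union_left T hx)).2 (hSF.1 hx)
  rw [hS, Finset.empty_union] at hST'
  subst hST'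
  rcases hT with ⟨-, -, hTK⟩ | hT
  · exact hMK (by rwa [Finset.sdiff_union_of_subset hFM.1] at hTK)
  · exact Finset.sdiff_nonempty.2 hFM.2 |>.ne_empty hT

theorem Missing.insert_sdiff_stellarS (hM : Missing K M) (hv : ∀ T ∈ K, v ∉ T)
    (hF : F.Nonempty) (hFM : F ⊂ M) : Missing (stellarS K F v) (insert v (M \ F)) := by
  have hvM := hM.notMem_of_forall_notMem hv
  have hvMF : v ∉ M \ F := fun h => hvM (Finset.mem_sdiff.1 h).1
  have hMF : (M \ F).Nonempty := Finset.sdiff_nonempty.2 hFM.2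
  refine ⟨?_, insert_sdiff_notMem_stellarS hv hM.2.1 hFM hvM, fun T hT hTne => ?_⟩
  · rw [Finset.card_insert_of_notMem hvMF]
    have := hMF.card_pos
    omega
  by_cases hvT : v ∈ T
  · have hT' : T.erase v ⊂ M \ F := by
      refine Finset.ssubset_iff_subset_ne.2 ⟨Finset.subset_insert_iff.1 hT.1, fun h => ?_⟩
      exact hT.ne (by rw [← h, Finset.insert_erase hvT])
    rw [← Finset.insert_erase hvT]
    refine insert_mem_stellarS hF (Finset.disjoint_of_subset_left hT'.1 Finset.sdiff_disjoint) ?_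
    refine hM.2.2 _ (Finset.ssubset_iff_subset_ne.2 ⟨?_, fun h => ?_⟩)
      (hF.mono Finset.subset_union_right)
    · exact Finset.union_subset (hT'.1.trans Finset.sdiff_subset) hFM.1
    · refine hT'.2 fun x hx => ?_
      rw [Finset.mem_sdiff, ← h, Finset.mem_union] at hx
      exact hx.1.resolve_right hx.2
  · have hTMF : T ⊆ M \ F := (Finset.subset_insert_iff_of_notMem hvT).1 hT.1
    obtain ⟨x, hx⟩ := hF
    have hxT : x ∉ T := fun h => (Finset.mem_sdiff.1 (hTMF h)).2 hx
    have hTM : T ⊂ M := Finset.ssubset_iff_subset_ne.2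
      ⟨hTMF.trans Finset.sdiff_subset, by rintro rfl; exact hxT (hFM.1 hx)⟩
    exact Or.inl ⟨hM.2.2 T hTM hTne, fun h => hxT (h hx)⟩

end Stellar

theorem missing_face_through_edge_shrinks_general {α : Type*} [DecidableEq α]
    (Δ Γ : SC α) (a b : α) (v : α)
    (h : IsStellar Δ Γ {a, b} v) (M : Finset α)
    (hM : Missing Δ.faces M) (hcard : 3 ≤ M.card) (hsub : ({a, b} : Finset α) ⊆ M) :
    ¬ Missing Γ.faces M ∧
    Missing Γ.faces ((M \ {a, b}) ∪ {v}) ∧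
    ((M \ {a, b}) ∪ {v}).card = M.card - 1 := by
  obtain ⟨-, he, hvV, -, hΓ⟩ := h
  have he2 : ({a, b} : Finset α).card = 2 := le_antisymm Finset.card_le_two he
  have heM : ({a, b} : Finset α) ⊂ M :=
    Finset.ssubset_iff_subset_ne.2 ⟨hsub, by rintro rfl; omega⟩
  have hv : ∀ T ∈ Δ.faces, v ∉ T := fun T hT hvT => hvV (Δ.subset_V T hT hvT)
  have hvM := hM.notMem_of_forall_notMem hv
  have hne : ({a, b} : Finset α).Nonempty := Finset.insert_nonempty a {b}
  rw [hΓ, Finset.union_singleton]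
  refine ⟨not_missing_of_ssubset_of_notMem heM hne
    (notMem_stellarS_self fun hve => hvM (hsub hve)), hM.insert_sdiff_stellarS hv hne heM, ?_⟩
  rw [Finset.card_insert_of_notMem fun h => hvM (Finset.mem_sdiff.1 h).1,
    Finset.card_sdiff_of_subset hsub, he2]
  omega

/-- If `M` is a missing face of `Δ` of size at least 3 containing the
subdivided edge `e = {a,b}`, then `M` is not missing in the edge subdivision `Γ`, while
`(M \ {a,b}) ∪ {v}` is a missing face of `Γ` of cardinality `|M| - 1`. -/
theorem missing_face_through_edge_shrinks {α : Type*} [DecidableEq α]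
    (Δ Γ : SC α) (a b : α) (hab : a ≠ b) (v : α)
    (h : IsStellar Δ Γ {a, b} v) (M : Finset α)
    (hM : Missing Δ.faces M) (hcard : 3 ≤ M.card) (hsub : ({a, b} : Finset α) ⊆ M) :
    ¬ Missing Γ.faces M ∧
    Missing Γ.faces ((M \ {a, b}) ∪ {v}) ∧
    ((M \ {a, b}) ∪ {v}).card = M.card - 1 :=
  missing_face_through_edge_shrinks_general Δ Γ a b v h M hM hcard hsub
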